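/- Let t > 0 and γ = 1/2 + i·t. Then conj(Λ_γ) = Λ_γ, so z ↦ conj(z) induces an anti-holomorphic involution σ of X_γ, and the fixed point set of σ equals the single circle p(ℝ), the image of the real axis. (This gives the topological type (1,1) of (X_γ, α_{(−,1)}) in region E.) -/

import Mathlib

open Complex

/-- The lattice `Λ_γ ⊆ ℂ` generated by `1` and `γ`. -/
noncomputable def Lambda (γ : ℂ) : AddSubgroup ℂ := AddSubgroup.closure {1, γ}

/-- The complex torus `X_γ = ℂ / Λ_γ`. -/
abbrev XTorus (γ : ℂ) := ℂ ⧸ Lambda γ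

/-- The quotient map `p : ℂ → X_γ`. -/
noncomputable def tproj (γ : ℂ) : ℂ → XTorus γ := QuotientAddGroup.mk

/-! Since `Re γ = 1/2`, `conj γ = 1 - γ ∈ Λ_γ`, so conjugation preserves `Λ_γ`. A point `p(z)` is
fixed by `σ` iff `2 i Im z = z - conj z = m + n γ` for some `m n : ℤ`; comparing real parts
forces `n = -2m`, so `i Im z = m/2 - m γ` and `p(z) = p(Re z + m/2)` lies on `p(ℝ)`. -/

open ComplexConjugate

lemma mem_Lambda_iff {γ x : ℂ} : x ∈ Lambda γ ↔ ∃ m n : ℤ, (m : ℂ) + n * γ = x := by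
  simp only [Lambda, AddSubgroup.mem_closure_pair, zsmul_eq_mul, mul_one]

lemma Lambda_le_comap_conj {γ : ℂ} (h : conj γ ∈ Lambda γ) :
    Lambda γ ≤ (Lambda γ).comap (starRingEnd ℂ).toAddMonoidHom := by
  refine AddSubgroup.closure_le _ |>.mpr ?_
  rintro _ (rfl | rfl)
  · simpa using (mem_Lambda_iff.mpr ⟨1, 0, by simp⟩ : (1 : ℂ) ∈ Lambda γ)
  · exact h

lemma image_conj_Lambda {γ : ℂ} (h : conj γ ∈ Lambda γ) :
    starRingEnd ℂ '' (Lambda γ : Set ℂ) = Lambda γ := by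
  have hmaps : Set.MapsTo (starRingEnd ℂ) (Lambda γ) (Lambda γ) :=
    fun _ hx ↦ Lambda_le_comap_conj h hx
  exact hmaps.image_subset.antisymm fun x hx ↦ ⟨conj x, hmaps hx, conj_conj x⟩

/-- The anti-holomorphic involution `σ` of `X_γ` induced by complex conjugation. -/
noncomputable def torusConj (γ : ℂ) (h : conj γ ∈ Lambda γ) : XTorus γ →+ XTorus γ :=
  QuotientAddGroup.map _ _ (starRingEnd ℂ).toAddMonoidHom (Lambda_le_comap_conj h)

lemma torusConj_tproj {γ : ℂ} (h : conj γ ∈ Lambda γ) (z : ℂ) :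
    torusConj γ h (tproj γ z) = tproj γ (conj z) :=
  rfl

lemma tproj_eq_tproj_iff {γ a b : ℂ} : tproj γ a = tproj γ b ↔ b - a ∈ Lambda γ := by
  rw [tproj, QuotientAddGroup.eq, neg_add_eq_sub]

lemma conj_mem_Lambda_of_re_eq_half {γ : ℂ} (hγ : γ.re = 1 / 2) : conj γ ∈ Lambda γ :=
  mem_Lambda_iff.mpr ⟨1, -1, by apply Complex.ext <;> simp [hγ]; norm_num⟩

lemma exists_real_tproj_eq {γ z : ℂ} (hγ : γ.re = 1 / 2) (hz : z - conj z ∈ Lambda γ) :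
    ∃ r : ℝ, tproj γ r = tproj γ z := by
  obtain ⟨m, n, hmn⟩ := mem_Lambda_iff.mp hz
  have hn : (n : ℂ) = -2 * m := by
    have hre := congrArg Complex.re hmn
    simp only [add_re, intCast_re, mul_re, hγ, one_div, intCast_im, zero_mul, sub_zero, sub_re,
      conj_re, sub_self] at hre
    exact_mod_cast (by linarith : (n : ℝ) = -2 * m)
  refine ⟨z.re + m / 2, tproj_eq_tproj_iff.mpr (mem_Lambda_iff.mpr ⟨0, -m, ?_⟩)⟩
  push_cast
  rw [re_eq_add_conj]
  linear_combination (1 / 2 : ℂ) * hmn - (γ / 2) * hn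

lemma fixedPoints_torusConj {γ : ℂ} (hγ : γ.re = 1 / 2) :
    {x | torusConj γ (conj_mem_Lambda_of_re_eq_half hγ) x = x}
      = tproj γ '' Set.range ofReal := by
  ext x
  obtain ⟨z, rfl⟩ := QuotientAddGroup.mk_surjective x
  change torusConj γ _ (tproj γ z) = tproj γ z ↔ tproj γ z ∈ _
  constructor
  · intro hfix
    rw [torusConj_tproj] at hfix
    obtain ⟨r, hr⟩ := exists_real_tproj_eq hγ (tproj_eq_tproj_iff.mp hfix)
    exact ⟨r, ⟨r, rfl⟩, hr⟩
  · rintro ⟨_, ⟨r, rfl⟩, hr⟩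
    rw [← hr, torusConj_tproj, conj_ofReal]

theorem region_E_conj_fixed_locus_general (t : ℝ) :
    (starRingEnd ℂ) '' (Lambda (1 / 2 + Complex.I * t) : Set ℂ)
        = (Lambda (1 / 2 + Complex.I * t) : Set ℂ) ∧
    ∃ σ : XTorus (1 / 2 + Complex.I * t) → XTorus (1 / 2 + Complex.I * t),
      (∀ z : ℂ, σ (tproj (1 / 2 + Complex.I * t) z)
          = tproj (1 / 2 + Complex.I * t) (starRingEnd ℂ z)) ∧
      {x : XTorus (1 / 2 + Complex.I * t) | σ x = x}
        = tproj (1 / 2 + Complex.I * t) '' Set.range (Complex.ofReal) := by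
  have hγ : (1 / 2 + I * t).re = 1 / 2 := by simp
  exact ⟨image_conj_Lambda (conj_mem_Lambda_of_re_eq_half hγ), torusConj _ _, torusConj_tproj _,
    fixedPoints_torusConj hγ⟩

/-- For `γ = 1/2 + i t` with `t > 0` (region `E`): the lattice is conjugation-stable,
conjugation induces an anti-holomorphic involution `σ` of `X_γ`, and the fixed point set of
`σ` is the single circle `p(ℝ)` (topological type `(1,1)`). -/
theorem region_E_conj_fixed_locus (t : ℝ) (ht : 0 < t) :
    (starRingEnd ℂ) '' (Lambda (1 / 2 + Complex.I * t) : Set ℂ)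
        = (Lambda (1 / 2 + Complex.I * t) : Set ℂ) ∧
    ∃ σ : XTorus (1 / 2 + Complex.I * t) → XTorus (1 / 2 + Complex.I * t),
      (∀ z : ℂ, σ (tproj (1 / 2 + Complex.I * t) z)
          = tproj (1 / 2 + Complex.I * t) (starRingEnd ℂ z)) ∧
      {x : XTorus (1 / 2 + Complex.I * t) | σ x = x}
        = tproj (1 / 2 + Complex.I * t) '' Set.range (Complex.ofReal) :=
  region_E_conj_fixed_locus_general t
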